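/- arXiv:1612.02986 — 2 statements merged into one kernel-verified Lean document; each statement's English description precedes it below -/
import Mathlib

section
/- Let G be a benzenoid system with a perfect matching. If the resonance graph R(G) contains a 4-cycle M1 M2 M3 M4 (where M1, M2, M3, M4 are perfect matchings of G), then h = M1 ⊕ M2 and h' = M1 ⊕ M4 are edge sets of two vertex-disjoint hexagons of G; moreover M3 ⊕ M4 = h and M2 ⊕ M3 = h'. -/
open scoped symmDiff

namespace GZZ

/-! ### Cells (hexagonal faces) of the hexagonal lattice in "brick wall" coordinates.

A vertex of the hexagonal lattice is a pair `(x, y) : ℤ × ℤ`; horizontal edges join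
`(x, y)` and `(x + 1, y)`, and vertical edges join `(x, y)` and `(x, y + 1)` for `x + y` even.
The hexagonal faces of the lattice are indexed by their lower-left vertex `c`
(with `c.1 + c.2` even). -/

abbrev V2 := ℤ × ℤ

/-- The six vertices of the hexagonal face with lower-left corner `c`. -/
def cellVerts (c : V2) : Set V2 :=
  {(c.1, c.2), (c.1 + 1, c.2), (c.1 + 2, c.2),
   (c.1, c.2 + 1), (c.1 + 1, c.2 + 1), (c.1 + 2, c.2 + 1)}

/-- The six edges of the hexagonal face with lower-left corner `c`. -/
def cellEdges (c : V2) : Set (Sym2 V2) :=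
  {s((c.1, c.2), (c.1 + 1, c.2)), s((c.1 + 1, c.2), (c.1 + 2, c.2)),
   s((c.1, c.2 + 1), (c.1 + 1, c.2 + 1)), s((c.1 + 1, c.2 + 1), (c.1 + 2, c.2 + 1)),
   s((c.1, c.2), (c.1, c.2 + 1)), s((c.1 + 2, c.2), (c.1 + 2, c.2 + 1))}

/-- Two hexagonal faces are adjacent when they share an edge. -/
def cellAdj (c d : V2) : Prop :=
  (d.1 - c.1, d.2 - c.2) ∈ ({(2, 0), (-2, 0), (1, 1), (1, -1), (-1, 1), (-1, -1)} : Set V2)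

/-- A set of hexagonal faces is connected (via sharing edges). -/
def CellConnected (S : Set V2) : Prop :=
  ∀ c ∈ S, ∀ d ∈ S, Relation.ReflTransGen (fun a b => a ∈ S ∧ b ∈ S ∧ cellAdj a b) c d

/-- A benzenoid system, given by its (finite, nonempty) set `B` of hexagonal faces:
the faces form a connected set and the complement has no holes (it is connected),
which is exactly the condition that `B` consists of all hexagons lying in the region
bounded by a cycle of the hexagonal lattice. -/
def IsBenzenoid (B : Set V2) : Prop :=
  B.Finite ∧ B.Nonempty ∧ (∀ c ∈ B, Even (c.1 + c.2)) ∧ CellConnected B ∧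
    CellConnected {c : V2 | Even (c.1 + c.2) ∧ c ∉ B}

section Generic

/-! ### Perfect matchings, resonance graphs and generalized Clar covers,
generically in a system of hexagonal cells `B` with vertex sets `cv` and edge sets `ce`. -/

variable {V C : Type*} (cv : C → Set V) (ce : C → Set (Sym2 V)) (B : Set C)

/-- The vertices of the system with cell set `B`. -/
def sysVerts : Set V := ⋃ c ∈ B, cv c

/-- The edges of the system with cell set `B`. -/
def sysEdges : Set (Sym2 V) := ⋃ c ∈ B, ce c

/-- A perfect matching: a set of pairwise non-incident edges of the system
covering all vertices of the system. -/
def IsPM (M : Set (Sym2 V)) : Prop :=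
  M ⊆ sysEdges ce B ∧
    (∀ e ∈ M, ∀ f ∈ M, e ≠ f → ∀ v : V, v ∈ e → v ∉ f) ∧
    (∀ v ∈ sysVerts cv B, ∃ e ∈ M, v ∈ e)

/-- The type of perfect matchings of the system. -/
abbrev PM := {M : Set (Sym2 V) // IsPM cv ce B M}

/-- The resonance graph: vertices are the perfect matchings, two perfect matchings
being adjacent whenever their symmetric difference is the edge set of a hexagon. -/
def resGraph : SimpleGraph (PM cv ce B) where
  Adj M N := M ≠ N ∧ ∃ c ∈ B, (M.val ∆ N.val) = ce c
  symm := ⟨by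
    rintro M N ⟨hne, c, hc, hd⟩
    exact ⟨hne.symm, c, hc, by rwa [symmDiff_comm]⟩⟩
  loopless := ⟨fun M h => h.1 rfl⟩

/-- The connected component (vertex set) of `v` in the spanning subgraph with edge set `E'`. -/
def compSet (E' : Set (Sym2 V)) (v : V) : Set V :=
  {w | (SimpleGraph.fromEdgeSet E').Reachable v w}

/-- The component of `v` in the spanning subgraph with edge set `E'` is a single edge `K₂`. -/
def IsK2Comp (E' : Set (Sym2 V)) (v : V) : Prop :=
  ∃ u w : V, u ≠ w ∧ s(u, w) ∈ E' ∧ compSet E' v = {u, w}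

/-- The component of `v` in the spanning subgraph with edge set `E'` is a cycle `Cₙ`. -/
def IsCycComp (n : ℕ) [NeZero n] (E' : Set (Sym2 V)) (v : V) : Prop :=
  ∃ c : ZMod n → V, Function.Injective c ∧ compSet E' v = Set.range c ∧
    (∀ i : ZMod n, s(c i, c (i + 1)) ∈ E') ∧
    (∀ e ∈ E', (∀ u, u ∈ e → u ∈ Set.range c) → ∃ i : ZMod n, e = s(c i, c (i + 1)))

/-- The number of `Cₙ`-components of the spanning subgraph with edge set `E'`. -/
noncomputable def numCyc (n : ℕ) [NeZero n] (Vs : Set V) (E' : Set (Sym2 V)) : ℕ :=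
  Set.ncard {S : Set V | ∃ v ∈ Vs, IsCycComp n E' v ∧ S = compSet E' v}

/-- A generalized Clar cover: a spanning subgraph (given by its edge set `E'`) of the
system each of whose connected components is a `C₆`, a `C₁₀` or a `K₂`. -/
def IsGenClarCover (E' : Set (Sym2 V)) : Prop :=
  E' ⊆ sysEdges ce B ∧
    ∀ v ∈ sysVerts cv B, IsK2Comp E' v ∨ IsCycComp 6 E' v ∨ IsCycComp 10 E' v

/-- `gz B k l`: the number of generalized Clar covers with exactly `k` components `C₆`
and `l` components `C₁₀`. -/
noncomputable def gz (k l : ℕ) : ℕ :=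
  Set.ncard {E' : Set (Sym2 V) | IsGenClarCover cv ce B E' ∧
    numCyc 6 (sysVerts cv B) E' = k ∧ numCyc 10 (sysVerts cv B) E' = l}

/-- The set of vertices of the resonance graph assigned by the map `f_{k,l}` to a
generalized Clar cover `E'`: all perfect matchings `M` such that `|M ∩ E(c)| = 3` for every
`C₆`-component (a hexagon) `c` of `E'`, `|M ∩ (E(h₁) ∪ E(h₂))| = 5` for every
`C₁₀`-component of `E'` formed by two hexagons `h₁, h₂`, and every `K₂`-component edge
of `E'` belongs to `M`. -/
def fSet (E' : Set (Sym2 V)) : Set (PM cv ce B) :=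
  {M | (∀ v ∈ sysVerts cv B, IsCycComp 6 E' v → ∀ h ∈ B, compSet E' v = cv h →
          Set.ncard (M.val ∩ ce h) = 3) ∧
       (∀ v ∈ sysVerts cv B, IsCycComp 10 E' v → ∀ h₁ ∈ B, ∀ h₂ ∈ B, h₁ ≠ h₂ →
          compSet E' v = cv h₁ ∪ cv h₂ →
          Set.ncard (M.val ∩ (ce h₁ ∪ ce h₂)) = 5) ∧
       (∀ u w : V, s(u, w) ∈ E' → compSet E' u = {u, w} → s(u, w) ∈ M.val)}

end Generic

/-! ### The graphs `Q_{k,l}` and the generalized cube polynomial. -/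

/-- The Cartesian (box) product of `n` copies of a graph `G`. -/
def boxPow {α : Type*} (G : SimpleGraph α) : (n : ℕ) → SimpleGraph (Fin n → α)
  | 0 => ⊥
  | n + 1 =>
    SimpleGraph.comap (fun f => (fun i => f i.castSucc, f (Fin.last n)))
      ((boxPow G n).boxProd G)

/-- The graph `Q_{k,l} = P₂^k □ P₃^l`. -/
def QGraph (k l : ℕ) : SimpleGraph ((Fin k → Fin 2) × (Fin l → Fin 3)) :=
  (boxPow (SimpleGraph.pathGraph 2) k).boxProd (boxPow (SimpleGraph.pathGraph 3) l)

/-- A set of vertices is convex if every shortest path between two of its vertices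
stays inside it. -/
def IsConvex {W : Type*} (G : SimpleGraph W) (S : Set W) : Prop :=
  ∀ u v : W, u ∈ S → v ∈ S → ∀ p : G.Walk u v, p.IsPath → p.length = G.dist u v →
    ∀ w ∈ p.support, w ∈ S

/-- `alphaQ G k l`: the number of induced convex subgraphs of `G` isomorphic to `Q_{k,l}`. -/
noncomputable def alphaQ {W : Type*} (G : SimpleGraph W) (k l : ℕ) : ℕ :=
  Set.ncard {S : Set W | IsConvex G S ∧ Nonempty (G.induce S ≃g QGraph k l)}

end GZZ

/-! If `M₁ M₂ M₃ M₄` is a 4-cycle of the resonance graph with `Mᵢ ∆ Mᵢ₊₁ = E(cᵢ)`, then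
`E(c₁) ∆ E(c₂) = M₁ ∆ M₃ = E(c₃) ∆ E(c₄)`. Two distinct hexagons share at most one edge,
so unless `c₁ = c₃` the six edges of `c₁` would be covered by at most three edges of
`c₂, c₃, c₄`; hence `c₁ = c₃` and `E(c₂) = E(c₄)`. If the hexagons `c₁` and `c₄` had a common
vertex `u`, then at `u` both `M₁` and `M₂` would use an edge common to `c₁` and `c₄`, i.e. the
same edge, contradicting that this edge lies in `M₁ ∆ M₂`. -/

theorem symmDiff_symmDiff_symmDiff_cancel {α : Type*} [GeneralizedBooleanAlgebra α] (a b c : α) :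
    a ∆ b ∆ (b ∆ c) = a ∆ c := by
  rw [symmDiff_assoc, symmDiff_symmDiff_cancel_left]

namespace GZZ

section Matching

variable {V C : Type*} {cv : C → Set V} {ce : C → Set (Sym2 V)} {B : Set C} {M M' : Set (Sym2 V)}

theorem IsPM.eq_of_mem_of_mem (hM : IsPM cv ce B M) {e f : Sym2 V} (he : e ∈ M) (hf : f ∈ M)
    {v : V} (hve : v ∈ e) (hvf : v ∈ f) : e = f :=
  by_contra fun hne => hM.2.1 e he f hf hne v hve hvf

theorem IsPM.mem_or_mem_of_mem_symmDiff (hM' : IsPM cv ce B M') {u v w : V} (hvw : v ≠ w)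
    (hv : s(u, v) ∈ M ∆ M') (hw : s(u, w) ∈ M ∆ M') : s(u, v) ∈ M ∨ s(u, w) ∈ M := by
  rw [Set.mem_symmDiff] at hv hw
  by_contra! h
  exact hvw (Sym2.congr_right.mp
    (hM'.eq_of_mem_of_mem (hv.resolve_left (by tauto)).1 (hw.resolve_left (by tauto)).1
      (Sym2.mem_mk_left u v) (Sym2.mem_mk_left u w)))

end Matching

theorem encard_cellEdges (c : V2) : (cellEdges c).encard = 6 := by
  obtain ⟨a, b⟩ := c
  rw [cellEdges, Set.encard_insert_of_notMem, Set.encard_insert_of_notMem,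
    Set.encard_insert_of_notMem, Set.encard_insert_of_notMem, Set.encard_pair]
  · rfl
  all_goals simp

theorem cellEdges_inter_subsingleton {c d : V2} (hc : Even (c.1 + c.2)) (hd : Even (d.1 + d.2))
    (hcd : c ≠ d) : (cellEdges c ∩ cellEdges d).Subsingleton := by
  -- without the parity conditions, the cells `(0, 0)` and `(1, 0)` would share two edges
  obtain ⟨a, b⟩ := c
  obtain ⟨p, q⟩ := d
  rw [Int.even_iff] at hc hd
  have hne : ¬(a = p ∧ b = q) := fun h => hcd (by rw [h.1, h.2])
  rintro e₁ ⟨h1c, h1d⟩ e₂ ⟨h2c, h2d⟩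
  simp only [cellEdges, Set.mem_insert_iff, Set.mem_singleton_iff] at h1c h2c
  rcases h1c with rfl | rfl | rfl | rfl | rfl | rfl <;>
    rcases h2c with rfl | rfl | rfl | rfl | rfl | rfl <;>
    first
    | rfl
    | simp only [cellEdges, Set.mem_insert_iff, Set.mem_singleton_iff, Sym2.eq_iff,
        Prod.mk.injEq] at h1d h2d
      omega

theorem exists_ne_mem_cellEdges_of_mem_cellVerts {c u : V2} (hu : u ∈ cellVerts c) :
    ∃ v w, v ≠ w ∧ s(u, v) ∈ cellEdges c ∧ s(u, w) ∈ cellEdges c := by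
  obtain ⟨a, b⟩ := c
  simp only [cellVerts, Set.mem_insert_iff, Set.mem_singleton_iff] at hu
  rcases hu with rfl | rfl | rfl | rfl | rfl | rfl
  exacts [⟨(a + 1, b), (a, b + 1), by simp [cellEdges]⟩,
    ⟨(a, b), (a + 2, b), by simp [cellEdges]⟩,
    ⟨(a + 1, b), (a + 2, b + 1), by simp [cellEdges]⟩,
    ⟨(a + 1, b + 1), (a, b), by simp [cellEdges]⟩,
    ⟨(a, b + 1), (a + 2, b + 1), by simp [cellEdges]⟩,
    ⟨(a + 1, b + 1), (a + 2, b), by simp [cellEdges]⟩]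

section HexagonMatching

variable {C : Type*} {cv : C → Set V2} {ce : C → Set (Sym2 V2)} {B : Set C}

theorem exists_mem_cellEdges_of_symmDiff_eq {M M' : Set (Sym2 V2)} (hM' : IsPM cv ce B M')
    {c u : V2}
    (hd : M ∆ M' = cellEdges c) (hu : u ∈ cellVerts c) : ∃ e ∈ M, u ∈ e ∧ e ∈ cellEdges c := by
  obtain ⟨v, w, hvw, hv, hw⟩ := exists_ne_mem_cellEdges_of_mem_cellVerts hu
  rcases hM'.mem_or_mem_of_mem_symmDiff hvw (hd ▸ hv) (hd ▸ hw) with hvM | hwM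
  · exact ⟨_, hvM, Sym2.mem_mk_left u v, hv⟩
  · exact ⟨_, hwM, Sym2.mem_mk_left u w, hw⟩

theorem eq_of_cellEdges_symmDiff_eq {c₁ c₂ c₃ c₄ : V2} (h₁ : Even (c₁.1 + c₁.2))
    (h₂ : Even (c₂.1 + c₂.2)) (h₃ : Even (c₃.1 + c₃.2)) (h₄ : Even (c₄.1 + c₄.2))
    (h₁₂ : c₁ ≠ c₂) (h₁₄ : c₁ ≠ c₄)
    (h : cellEdges c₁ ∆ cellEdges c₂ = cellEdges c₃ ∆ cellEdges c₄) : c₁ = c₃ := by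
  by_contra h₁₃
  have hcover : cellEdges c₁ ⊆ cellEdges c₁ ∩ cellEdges c₂ ∪ cellEdges c₁ ∩ cellEdges c₃ ∪
      cellEdges c₁ ∩ cellEdges c₄ := by
    intro e he
    have he' := Set.ext_iff.mp h e
    simp only [Set.mem_symmDiff, Set.mem_union, Set.mem_inter_iff] at he' ⊢
    tauto
  have : (6 : ℕ∞) ≤ 3 := calc
    6 = (cellEdges c₁).encard := (encard_cellEdges c₁).symm
    _ ≤ (cellEdges c₁ ∩ cellEdges c₂).encard + (cellEdges c₁ ∩ cellEdges c₃).encard +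
        (cellEdges c₁ ∩ cellEdges c₄).encard :=
      (Set.encard_le_encard hcover).trans
        ((Set.encard_union_le _ _).trans (add_le_add_left (Set.encard_union_le _ _) _))
    _ ≤ 1 + 1 + 1 := by
      gcongr <;> rw [Set.encard_le_one_iff_subsingleton] <;>
        exact cellEdges_inter_subsingleton h₁ ‹_› ‹_›
    _ = 3 := by norm_num
  exact absurd this (by norm_num)

theorem disjoint_cellVerts_of_symmDiff_eq {M₁ M₂ M₃ M₄ : Set (Sym2 V2)} (hM₁ : IsPM cv ce B M₁)
    (hM₂ : IsPM cv ce B M₂) (hM₃ : IsPM cv ce B M₃) (hM₄ : IsPM cv ce B M₄) {c d : V2}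
    (hc : Even (c.1 + c.2)) (hd : Even (d.1 + d.2)) (hcd : c ≠ d)
    (h₁₂ : M₁ ∆ M₂ = cellEdges c) (h₁₄ : M₁ ∆ M₄ = cellEdges d) (h₂₃ : M₂ ∆ M₃ = cellEdges d) :
    Disjoint (cellVerts c) (cellVerts d) := by
  refine Set.disjoint_left.mpr fun u huc hud => ?_
  obtain ⟨e, he₁, hue, hec⟩ := exists_mem_cellEdges_of_symmDiff_eq hM₂ h₁₂ huc
  obtain ⟨e', he'₁, hue', he'd⟩ := exists_mem_cellEdges_of_symmDiff_eq hM₄ h₁₄ hud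
  obtain ⟨f, hf₂, huf, hfc⟩ :=
    exists_mem_cellEdges_of_symmDiff_eq hM₁ (by rw [symmDiff_comm, h₁₂]) huc
  obtain ⟨f', hf'₂, huf', hf'd⟩ := exists_mem_cellEdges_of_symmDiff_eq hM₃ h₂₃ hud
  obtain rfl : e = e' := hM₁.eq_of_mem_of_mem he₁ he'₁ hue hue'
  obtain rfl : f = f' := hM₂.eq_of_mem_of_mem hf₂ hf'₂ huf huf'
  obtain rfl : e = f := cellEdges_inter_subsingleton hc hd hcd ⟨hec, he'd⟩ ⟨hfc, hf'd⟩
  have he : e ∈ M₁ ∆ M₂ := h₁₂ ▸ hec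
  rw [Set.mem_symmDiff] at he
  tauto

end HexagonMatching

/-- **Lemma 3.** If the resonance graph of a benzenoid system `G` contains a
4-cycle `M₁M₂M₃M₄`, then `h = M₁ ⊕ M₂` and `h' = M₁ ⊕ M₄` are edge sets of two
vertex-disjoint hexagons of `G`; moreover `M₃ ⊕ M₄ = h` and `M₂ ⊕ M₃ = h'`. -/
theorem four_cycle_lemma (B : Set V2) (hB : IsBenzenoid B)
    (M₁ M₂ M₃ M₄ : PM cellVerts cellEdges B)
    (h12 : (resGraph cellVerts cellEdges B).Adj M₁ M₂)
    (h23 : (resGraph cellVerts cellEdges B).Adj M₂ M₃)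
    (h34 : (resGraph cellVerts cellEdges B).Adj M₃ M₄)
    (h41 : (resGraph cellVerts cellEdges B).Adj M₄ M₁)
    (h13 : M₁ ≠ M₃) (h24 : M₂ ≠ M₄) :
    ∃ h ∈ B, ∃ h' ∈ B,
      M₁.val ∆ M₂.val = cellEdges h ∧ M₁.val ∆ M₄.val = cellEdges h' ∧
      cellVerts h ∩ cellVerts h' = ∅ ∧
      M₃.val ∆ M₄.val = cellEdges h ∧ M₂.val ∆ M₃.val = cellEdges h' := by
  obtain ⟨-, c₁, hc₁, hd12⟩ := h12
  obtain ⟨-, c₂, hc₂, hd23⟩ := h23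
  obtain ⟨-, c₃, hc₃, hd34⟩ := h34
  obtain ⟨-, c₄, hc₄, hd41⟩ := h41
  have heven := hB.2.2.1
  have hd13 : M₁.val ∆ M₃.val = cellEdges c₁ ∆ cellEdges c₂ := by
    rw [← hd12, ← hd23, symmDiff_symmDiff_symmDiff_cancel]
  have hd31 : M₃.val ∆ M₁.val = cellEdges c₃ ∆ cellEdges c₄ := by
    rw [← hd34, ← hd41, symmDiff_symmDiff_symmDiff_cancel]
  have hd24 : M₂.val ∆ M₄.val = cellEdges c₁ ∆ cellEdges c₄ := by
    rw [← hd12, ← hd41, symmDiff_comm M₁.val, symmDiff_comm M₄.val,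
      symmDiff_symmDiff_symmDiff_cancel]
  have hc12 : c₁ ≠ c₂ := fun h =>
    h13 (Subtype.ext (symmDiff_eq_bot.mp (by rw [hd13, h, symmDiff_self])))
  have hc14 : c₁ ≠ c₄ := fun h =>
    h24 (Subtype.ext (symmDiff_eq_bot.mp (by rw [hd24, h, symmDiff_self])))
  have hcyc : cellEdges c₁ ∆ cellEdges c₂ = cellEdges c₃ ∆ cellEdges c₄ := by
    rw [← hd13, symmDiff_comm, hd31]
  obtain rfl : c₁ = c₃ := eq_of_cellEdges_symmDiff_eq (heven _ hc₁) (heven _ hc₂) (heven _ hc₃)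
    (heven _ hc₄) hc12 hc14 hcyc
  have hd23' : M₂.val ∆ M₃.val = cellEdges c₄ := hd23.trans (symmDiff_right_injective _ hcyc)
  have hd14 : M₁.val ∆ M₄.val = cellEdges c₄ := by rw [symmDiff_comm, hd41]
  refine ⟨c₁, hc₁, c₄, hc₄, hd12, hd14, ?_, hd34, hd23'⟩
  exact Set.disjoint_iff_inter_eq_empty.mp <| disjoint_cellVerts_of_symmDiff_eq M₁.2 M₂.2 M₃.2
    M₄.2 (heven _ hc₁) (heven _ hc₄) hc14 hd12 hd14 hd23'

end GZZ
end

section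
/- Let G be a benzenoid system with a perfect matching, let Q be an induced convex subgraph of R(G) isomorphic to Q_{k,l} with vertices identified with tuples as in the standard representation. Let M be the all-zero vertex; for i ∈ {k+1,…,k+l} let N^i be the vertex with 1 in position i and 0 elsewhere and O^i the vertex with 2 in position i and 0 elsewhere, and let h_i and h_i' be the hexagons of G with M ⊕ N^i = E(h_i) and N^i ⊕ O^i = E(h_i'). Then for each i ∈ {k+1,…,k+l} the hexagons h_i and h_i' have exactly one common edge. -/
open scoped symmDiff

namespace GZZ

/-- The "tuple" description of `Q_{k,l}`: vertices are tuples
`(b₁, …, b_k, b_{k+1}, …, b_{k+l})` with `bᵢ ∈ {0,1}` for `i ≤ k` and `bᵢ ∈ {0,1,2}` for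
`i > k`, two tuples being adjacent iff they differ by exactly `1` in exactly one
coordinate. -/
def tupleGraph (k l : ℕ) : SimpleGraph ((Fin k → Fin 2) × (Fin l → Fin 3)) where
  Adj p q :=
    (∃ i : Fin k, ((p.1 i : ℕ) = (q.1 i : ℕ) + 1 ∨ (q.1 i : ℕ) = (p.1 i : ℕ) + 1) ∧
      (∀ j : Fin k, j ≠ i → p.1 j = q.1 j) ∧ p.2 = q.2) ∨
    (∃ i : Fin l, ((p.2 i : ℕ) = (q.2 i : ℕ) + 1 ∨ (q.2 i : ℕ) = (p.2 i : ℕ) + 1) ∧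
      (∀ j : Fin l, j ≠ i → p.2 j = q.2 j) ∧ p.1 = q.1)
  symm := ⟨by
    rintro p q (⟨i, hd, hj, h2⟩ | ⟨i, hd, hj, h2⟩)
    · exact Or.inl ⟨i, hd.symm, fun j hji => (hj j hji).symm, h2.symm⟩
    · exact Or.inr ⟨i, hd.symm, fun j hji => (hj j hji).symm, h2.symm⟩⟩
  loopless := ⟨by
    rintro p (⟨i, hd, -, -⟩ | ⟨i, hd, -, -⟩) <;> omega⟩

end GZZ
namespace GZZ

/-!
Suppose `hᵢ` and `hᵢ'` share no edge. Two hexagons of the lattice that share a vertex share an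
edge, so they are vertex-disjoint, and the two rotations commute: `M ⊕ E(hᵢ')` is again a
perfect matching, adjacent to `M` and to `Oⁱ`. As `M ⊕ Oⁱ = E(hᵢ) ∪ E(hᵢ')` is not a hexagon,
`M` and `Oⁱ` are at distance two, so convexity puts `M ⊕ E(hᵢ')` into `Q`. But in `Q_{k,l}`
the only common neighbour of `M` and `Oⁱ` is `Nⁱ = M ⊕ E(hᵢ)`, forcing `hᵢ = hᵢ'`.
Hence the hexagons are adjacent, and adjacent hexagons share exactly one edge.
-/

section PerfectMatching

variable {V C : Type*} {cv : C → Set V} {ce : C → Set (Sym2 V)} {B : Set C}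

theorem IsPM.symmDiff_of_agree {X Y D : Set (Sym2 V)} {W : Set V} (hX : IsPM cv ce B X)
    (hXD : IsPM cv ce B (X ∆ D)) (hY : IsPM cv ce B Y) (hDW : ∀ e ∈ D, ∀ v ∈ e, v ∈ W)
    (hXY : ∀ e, ∀ v ∈ e, v ∈ W → (e ∈ X ↔ e ∈ Y)) : IsPM cv ce B (Y ∆ D) := by
  have near : ∀ e, ∀ v ∈ e, v ∈ W → (e ∈ Y ∆ D ↔ e ∈ X ∆ D) := fun e v hv hvW => by
    simp only [Set.mem_symmDiff, hXY e v hv hvW]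
  have far : ∀ e ∈ Y ∆ D, ∀ v ∈ e, v ∉ W → e ∈ Y := fun e he v hv hvW => by
    rcases he with ⟨heY, -⟩ | ⟨heD, -⟩
    exacts [heY, absurd (hDW e heD v hv) hvW]
  refine ⟨fun e he => ?_, fun e he f hf hef v hve hvf => ?_, fun v hv => ?_⟩
  · rcases he with ⟨heY, -⟩ | ⟨heD, -⟩
    · exact hY.1 heY
    · by_cases heX : e ∈ X
      exacts [hX.1 heX, hXD.1 (Or.inr ⟨heD, heX⟩)]
  · by_cases hvW : v ∈ W
    · exact hXD.2.1 e ((near e v hve hvW).1 he) f ((near f v hvf hvW).1 hf) hef v hve hvf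
    · exact hY.2.1 e (far e he v hve hvW) f (far f hf v hvf hvW) hef v hve hvf
  · by_cases hvW : v ∈ W
    · obtain ⟨e, he, hve⟩ := hXD.2.2 v hv
      exact ⟨e, (near e v hve hvW).2 he, hve⟩
    · obtain ⟨e, he, hve⟩ := hY.2.2 v hv
      exact ⟨e, Or.inl ⟨he, fun heD => hvW (hDW e heD v hve)⟩, hve⟩

end PerfectMatching

theorem IsConvex.mem_of_adj_of_adj {W : Type*} {G : SimpleGraph W} {S : Set W}
    (hS : IsConvex G S) {u v w : W} (hu : u ∈ S) (hw : w ∈ S) (huv : G.Adj u v)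
    (hvw : G.Adj v w) (huw : u ≠ w) (hnadj : ¬G.Adj u w) : v ∈ S := by
  let p : G.Walk u w := .cons huv (.cons hvw .nil)
  have hp : p.IsPath := by
    simp [p, SimpleGraph.Walk.cons_isPath_iff, huv.ne, hvw.ne, huw]
  have hdist : G.dist u w = 2 := by
    have hle : G.dist u w ≤ 2 := SimpleGraph.dist_le p
    have h0 : G.dist u w ≠ 0 := fun h => huw ((p.reachable.dist_eq_zero_iff).1 h)
    have h1 : G.dist u w ≠ 1 := fun h => hnadj (SimpleGraph.dist_eq_one_iff_adj.1 h)
    omega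
  exact hS u w hu hw p hp hdist.symm v (by simp [p])

section TupleGraph

variable {k l : ℕ} {p q : (Fin k → Fin 2) × (Fin l → Fin 3)}

lemma tupleGraph_adj_snd_le (hpq : (tupleGraph k l).Adj p q) (j : Fin l) :
    (p.2 j : ℕ) ≤ q.2 j + 1 := by
  rcases hpq with ⟨-, -, -, h2⟩ | ⟨j', hd, hoff, -⟩
  · rw [h2]; omega
  · by_cases hj : j = j'
    · subst hj; omega
    · rw [hoff j hj]; omega

lemma tupleGraph_adj_eq_of_snd_ne (hpq : (tupleGraph k l).Adj p q) {j : Fin l}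
    (hj : p.2 j ≠ q.2 j) : p.1 = q.1 ∧ ∀ j' ≠ j, p.2 j' = q.2 j' := by
  rcases hpq with ⟨-, -, -, h2⟩ | ⟨j', -, hoff, h1⟩
  · exact absurd (congrFun h2 j) hj
  · obtain rfl : j = j' := by_contra fun h => hj (hoff j h)
    exact ⟨h1, hoff⟩

lemma tupleGraph_eq_of_adj_zero_of_adj_two {i : Fin l} {t : (Fin k → Fin 2) × (Fin l → Fin 3)}
    (h0 : (tupleGraph k l).Adj t (fun _ => 0, fun _ => 0))
    (h2 : (tupleGraph k l).Adj t (fun _ => 0, fun j => if j = i then 2 else 0)) :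
    t = (fun _ => 0, fun j => if j = i then 1 else 0) := by
  have hle := tupleGraph_adj_snd_le h0 i
  have hge := tupleGraph_adj_snd_le h2.symm i
  simp only [if_true, Fin.val_zero, Fin.isValue] at hle hge
  have hti : t.2 i = 1 := Fin.ext (by simp only [Fin.val_one]; omega)
  obtain ⟨h1, hrest⟩ := tupleGraph_adj_eq_of_snd_ne h0 (j := i) (by simp [hti])
  refine Prod.ext h1 (funext fun j => ?_)
  by_cases hj : j = i
  · subst hj; simp [hti]
  · simp [hj, hrest j hj]

end TupleGraph

section Lattice

lemma mem_cellVerts_of_mem_cellEdges {c v : V2} {e : Sym2 V2} (he : e ∈ cellEdges c)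
    (hv : v ∈ e) : v ∈ cellVerts c := by
  simp only [cellEdges, Set.mem_insert_iff, Set.mem_singleton_iff] at he
  rcases he with rfl | rfl | rfl | rfl | rfl | rfl <;>
    rcases Sym2.mem_iff.mp hv with rfl | rfl <;> simp [cellVerts]

lemma cellEdges_nonempty (c : V2) : (cellEdges c).Nonempty :=
  ⟨_, Set.mem_insert _ _⟩

lemma eq_of_cellEdges_subset {c d : V2} (h : cellEdges c ⊆ cellEdges d) : c = d := by
  have hl := h (show s((c.1, c.2), (c.1, c.2 + 1)) ∈ cellEdges c by simp [cellEdges])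
  have hr := h (show s((c.1 + 2, c.2), (c.1 + 2, c.2 + 1)) ∈ cellEdges c by simp [cellEdges])
  simp only [cellEdges, Set.mem_insert_iff, Set.mem_singleton_iff, Sym2.eq_iff,
    Prod.mk.injEq] at hl hr
  exact Prod.ext (by omega) (by omega)

lemma cellEdges_injective : Function.Injective cellEdges := fun _ _ h =>
  eq_of_cellEdges_subset h.subset

/-- Of the offsets `d - c` at which the vertex sets can meet, parity excludes `(±1, 0)`,
`(0, ±1)` and `(±2, ±1)`. -/
lemma cellAdj_of_mem_cellVerts {c d v : V2} (hc : Even (c.1 + c.2)) (hd : Even (d.1 + d.2))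
    (hne : c ≠ d) (hvc : v ∈ cellVerts c) (hvd : v ∈ cellVerts d) : cellAdj c d := by
  have hbox : c.1 - 2 ≤ d.1 ∧ d.1 ≤ c.1 + 2 ∧ c.2 - 1 ≤ d.2 ∧ d.2 ≤ c.2 + 1 := by
    simp only [cellVerts, Set.mem_insert_iff, Set.mem_singleton_iff, Prod.ext_iff] at hvc hvd
    omega
  obtain ⟨m, hm⟩ := hc
  obtain ⟨n, hn⟩ := hd
  rw [Ne, Prod.ext_iff] at hne
  simp only [cellAdj, Set.mem_insert_iff, Set.mem_singleton_iff, Prod.mk.injEq]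
  omega

lemma cellEdges_inter_nonempty_of_cellAdj {c d : V2} (h : cellAdj c d) :
    (cellEdges c ∩ cellEdges d).Nonempty := by
  obtain ⟨c1, c2⟩ := c
  obtain ⟨d1, d2⟩ := d
  simp only [cellAdj, Set.mem_insert_iff, Set.mem_singleton_iff, Prod.mk.injEq,
    sub_eq_iff_eq_add] at h
  rcases h with ⟨rfl, rfl⟩ | ⟨rfl, rfl⟩ | ⟨rfl, rfl⟩ | ⟨rfl, rfl⟩ | ⟨rfl, rfl⟩ | ⟨rfl, rfl⟩
  · exact ⟨s((c1 + 2, c2), (c1 + 2, c2 + 1)), by simp [cellEdges], by simp [cellEdges]; omega⟩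
  · exact ⟨s((c1, c2), (c1, c2 + 1)), by simp [cellEdges], by simp [cellEdges]⟩
  · exact ⟨s((c1 + 1, c2 + 1), (c1 + 2, c2 + 1)), by simp [cellEdges],
      by simp [cellEdges]; omega⟩
  · exact ⟨s((c1 + 1, c2), (c1 + 2, c2)), by simp [cellEdges], by simp [cellEdges]; omega⟩
  · exact ⟨s((c1, c2 + 1), (c1 + 1, c2 + 1)), by simp [cellEdges], by simp [cellEdges]; omega⟩
  · exact ⟨s((c1, c2), (c1 + 1, c2)), by simp [cellEdges], by simp [cellEdges]; omega⟩

lemma cellEdges_inter_subsingleton_of_cellAdj {c d : V2} (h : cellAdj c d) :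
    (cellEdges c ∩ cellEdges d).Subsingleton := by
  rintro e ⟨hc, hd⟩ e' ⟨hc', hd'⟩
  simp only [cellAdj, Set.mem_insert_iff, Set.mem_singleton_iff, Prod.mk.injEq] at h
  simp only [cellEdges, Set.mem_insert_iff, Set.mem_singleton_iff] at hc hd hc' hd'
  rcases hc with rfl | rfl | rfl | rfl | rfl | rfl <;>
    simp only [Sym2.eq_iff, Prod.mk.injEq] at hd <;>
    rcases hc' with rfl | rfl | rfl | rfl | rfl | rfl <;>
    simp only [Sym2.eq_iff, Prod.mk.injEq] at hd' ⊢ <;> omega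

lemma ncard_cellEdges_inter_of_cellAdj {c d : V2} (h : cellAdj c d) :
    (cellEdges c ∩ cellEdges d).ncard = 1 := by
  obtain ⟨e, he⟩ := cellEdges_inter_nonempty_of_cellAdj h
  exact Set.ncard_eq_one.2 ⟨e, (cellEdges_inter_subsingleton_of_cellAdj h).eq_singleton_of_mem he⟩

end Lattice

section Resonance

variable {B : Set V2} {M N O : PM cellVerts cellEdges B} {c d : V2}

lemma resGraph_adj_of_symmDiff_eq (hc : c ∈ B) (h : M.1 ∆ N.1 = cellEdges c) :
    (resGraph cellVerts cellEdges B).Adj M N := by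
  refine ⟨fun hMN => ?_, c, hc, h⟩
  rw [hMN, symmDiff_self] at h
  exact (cellEdges_nonempty c).ne_empty h.symm

lemma resGraph_not_adj_of_symmDiff_eq_union (hcd : c ≠ d)
    (h : M.1 ∆ O.1 = cellEdges c ∪ cellEdges d) : ¬(resGraph cellVerts cellEdges B).Adj M O := by
  rintro ⟨-, x, -, hx⟩
  rw [h] at hx
  exact hcd ((eq_of_cellEdges_subset (hx ▸ Set.subset_union_left)).trans
    (eq_of_cellEdges_subset (hx ▸ Set.subset_union_right)).symm)

lemma exists_resGraph_detour (hc : c ∈ B) (hd : d ∈ B) (hMN : M.1 ∆ N.1 = cellEdges c)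
    (hNO : N.1 ∆ O.1 = cellEdges d) (hcd : Disjoint (cellVerts c) (cellVerts d)) :
    M ≠ O ∧ ¬(resGraph cellVerts cellEdges B).Adj M O ∧ ∃ M', M' ≠ N ∧
      (resGraph cellVerts cellEdges B).Adj M M' ∧ (resGraph cellVerts cellEdges B).Adj M' O := by
  have hN : N.1 = M.1 ∆ cellEdges c := by rw [← hMN, symmDiff_symmDiff_cancel_left]
  have hO : O.1 = N.1 ∆ cellEdges d := by rw [← hNO, symmDiff_symmDiff_cancel_left]
  have hE : Disjoint (cellEdges c) (cellEdges d) := Set.disjoint_left.2 fun e he he' =>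
    Set.disjoint_left.1 hcd (mem_cellVerts_of_mem_cellEdges he (Sym2.out_fst_mem e))
      (mem_cellVerts_of_mem_cellEdges he' (Sym2.out_fst_mem e))
  have hne : c ≠ d := by
    rintro rfl
    exact (cellEdges_nonempty c).ne_empty (disjoint_self.1 hE)
  have hMO : M.1 ∆ O.1 = cellEdges c ∪ cellEdges d := by
    rw [hO, hN, symmDiff_assoc, symmDiff_symmDiff_cancel_left, hE.symmDiff_eq_sup]
    rfl
  have hpm : IsPM cellVerts cellEdges B (M.1 ∆ cellEdges d) := by
    refine IsPM.symmDiff_of_agree N.2 (hO ▸ O.2) M.2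
      (fun e he v hv => mem_cellVerts_of_mem_cellEdges he hv) fun e v hv hvd => ?_
    have he : e ∉ M.1 ∆ N.1 := fun he =>
      Set.disjoint_left.1 hcd (mem_cellVerts_of_mem_cellEdges (hMN ▸ he) hv) hvd
    simp only [Set.mem_symmDiff] at he
    tauto
  refine ⟨fun h => ?_, resGraph_not_adj_of_symmDiff_eq_union hne hMO,
    ⟨_, hpm⟩, fun h => hne ?_, resGraph_adj_of_symmDiff_eq hd (symmDiff_symmDiff_cancel_left _ _),
    resGraph_adj_of_symmDiff_eq hc ?_⟩
  · rw [h, symmDiff_self] at hMO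
    exact (cellEdges_nonempty c).ne_empty (Set.union_empty_iff.1 hMO.symm).1
  · have h' : M.1 ∆ cellEdges d = M.1 ∆ cellEdges c := (congrArg Subtype.val h).trans hN
    exact cellEdges_injective (symmDiff_right_injective _ h').symm
  · rw [hO, hN, symmDiff_symmDiff_symmDiff_comm, symmDiff_symmDiff_cancel_left, symmDiff_self,
      symmDiff_bot]

end Resonance

theorem hexagon_pair_common_edge_general (B : Set V2) (hB : IsBenzenoid B) (k l : ℕ)
    (S : Set (PM cellVerts cellEdges B))
    (hconv : IsConvex (resGraph cellVerts cellEdges B) S)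
    (φ : tupleGraph k l ≃g (resGraph cellVerts cellEdges B).induce S)
    (h h' : Fin l → V2) (hhB : ∀ i, h i ∈ B) (hh'B : ∀ i, h' i ∈ B)
    (hhex : ∀ i : Fin l,
      (φ (fun _ => 0, fun _ => 0)).val.val ∆
        (φ (fun _ => 0, fun j => if j = i then 1 else 0)).val.val = cellEdges (h i))
    (hhex' : ∀ i : Fin l,
      (φ (fun _ => 0, fun j => if j = i then 1 else 0)).val.val ∆
        (φ (fun _ => 0, fun j => if j = i then 2 else 0)).val.val = cellEdges (h' i)) :
    ∀ i : Fin l, Set.ncard (cellEdges (h i) ∩ cellEdges (h' i)) = 1 := by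
  intro i
  have hne : h i ≠ h' i := by
    intro heq
    have hMO : (φ (fun _ => 0, fun _ => 0)).val.val =
        (φ (fun _ => 0, fun j => if j = i then 2 else 0)).val.val := by
      rw [← symmDiff_left_inj, hhex, symmDiff_comm, hhex', heq]
    have h0 := congrFun (congrArg Prod.snd (φ.injective (Subtype.ext (Subtype.ext hMO)))) i
    simp at h0
  refine ncard_cellEdges_inter_of_cellAdj (by_contra fun hadj => ?_)
  have hdisj : Disjoint (cellVerts (h i)) (cellVerts (h' i)) := Set.disjoint_left.2
    fun _ hv hv' => hadj (cellAdj_of_mem_cellVerts (hB.2.2.1 _ (hhB i)) (hB.2.2.1 _ (hh'B i))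
      hne hv hv')
  obtain ⟨hMO, hnadj, M', hM'N, hMM', hM'O⟩ :=
    exists_resGraph_detour (hhB i) (hh'B i) (hhex i) (hhex' i) hdisj
  have hM'S : M' ∈ S := hconv.mem_of_adj_of_adj (φ _).2 (φ _).2 hMM' hM'O hMO hnadj
  have hM' : φ.symm ⟨M', hM'S⟩ = (fun _ => 0, fun j => if j = i then 1 else 0) :=
    tupleGraph_eq_of_adj_zero_of_adj_two
      (φ.map_adj_iff.1 (by simpa using hMM'.symm)) (φ.map_adj_iff.1 (by simpa using hM'O))
  exact hM'N (congrArg Subtype.val (φ.symm_apply_eq.1 hM'))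

/-- **Claim 2.** With `Q` an induced convex subgraph of the resonance graph of
a benzenoid system isomorphic to `Q_{k,l}` (vertices identified with tuples), `M` the
all-zero vertex, and, for `i ∈ {k+1, …, k+l}`, `Nⁱ` (resp. `Oⁱ`) the vertex with `1`
(resp. `2`) in position `i` and `0` elsewhere, let `hᵢ` and `hᵢ'` be the hexagons with
`M ⊕ Nⁱ = E(hᵢ)` and `Nⁱ ⊕ Oⁱ = E(hᵢ')`. Then `hᵢ` and `hᵢ'` have exactly one common
edge. -/
theorem hexagon_pair_common_edge (B : Set V2) (hB : IsBenzenoid B)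
    (hex : ∃ M, IsPM cellVerts cellEdges B M) (k l : ℕ)
    (S : Set (PM cellVerts cellEdges B))
    (hconv : IsConvex (resGraph cellVerts cellEdges B) S)
    (φ : tupleGraph k l ≃g (resGraph cellVerts cellEdges B).induce S)
    (h h' : Fin l → V2) (hhB : ∀ i, h i ∈ B) (hh'B : ∀ i, h' i ∈ B)
    (hhex : ∀ i : Fin l,
      (φ (fun _ => 0, fun _ => 0)).val.val ∆
        (φ (fun _ => 0, fun j => if j = i then 1 else 0)).val.val = cellEdges (h i))
    (hhex' : ∀ i : Fin l,
      (φ (fun _ => 0, fun j => if j = i then 1 else 0)).val.val ∆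
        (φ (fun _ => 0, fun j => if j = i then 2 else 0)).val.val = cellEdges (h' i)) :
    ∀ i : Fin l, Set.ncard (cellEdges (h i) ∩ cellEdges (h' i)) = 1 :=
  hexagon_pair_common_edge_general B hB k l S hconv φ h h' hhB hh'B hhex hhex'

end GZZ
end
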